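/- arXiv:2308.16838 — 3 statements merged into one kernel-verified Lean document; each statement's English description precedes it below -/
import Mathlib

section
/- Given a small category C and a full subcategory D, the assignment J^D(x) = { sieves S on x such that for every object w of D, the natural map ⊔_{(f: y → x) ∈ S} Hom_C(w, y) → Hom_C(w, x) given by composition is surjective } defines a Grothendieck topology on C. -/
open CategoryTheory

/-- A sieve `S` on `x` is a covering sieve for the subcategory topology determined by a
(strictly full) subcategory with object predicate `P` if, for every object `w`
satisfying `P`, the natural composition map
`⊔_{(f : y ⟶ x) ∈ S} Hom(w, y) → Hom(w, x)` is surjective, i.e. every morphism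
`g : w ⟶ x` factors as `g = h ≫ f` with `f ∈ S`. -/
def subcatCovers {C : Type u} [SmallCategory C] (P : C → Prop) {x : C} (S : Sieve x) : Prop :=
  ∀ w : C, P w → ∀ g : w ⟶ x, ∃ (y : C) (f : y ⟶ x) (h : w ⟶ y), S f ∧ h ≫ f = g

/-
A sieve is closed under precomposition, so the factorisation condition of `subcatCovers`
just says that `S` contains every morphism out of an object of `D`. In that form the three
axioms are immediate: the maximal sieve contains everything, membership in a pullback
sieve is membership of a composite, and for transitivity a morphism `g : w ⟶ x` with `P w`
lies in `S`, so `R.pullback g` covers and contains `𝟙 w`, i.e. `R g`.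
-/

namespace CategoryTheory

variable {C : Type*} [SmallCategory C] (P : C → Prop)

theorem subcatCovers_iff_forall_mem {x : C} (S : Sieve x) :
    subcatCovers P S ↔ ∀ w : C, P w → ∀ g : w ⟶ x, S g := by
  constructor
  · rintro hS w hw g
    obtain ⟨y, f, h, hf, rfl⟩ := hS w hw g
    exact S.downward_closed hf h
  · intro hS w hw g
    exact ⟨w, g, 𝟙 w, hS w hw g, Category.id_comp g⟩

def subcategoryTopology : GrothendieckTopology C where
  sieves x := {S | ∀ w : C, P w → ∀ g : w ⟶ x, S g}
  top_mem' _ _ _ _ := trivial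
  pullback_stable' _ _ _ f hS w hw g := hS w hw (g ≫ f)
  transitive' _ S hS R hR w hw g := by
    simpa using hR (hS w hw g) w hw (𝟙 w)

theorem mem_subcategoryTopology_iff {x : C} (S : Sieve x) :
    S ∈ subcategoryTopology P x ↔ subcatCovers P S :=
  (subcatCovers_iff_forall_mem P S).symm

end CategoryTheory

/-- Given a small category `C` and a full subcategory `D` (with objects those satisfying
the predicate `P`), the assignment `J^D(x) = {S : subcatCovers P S}` defines a
Grothendieck topology on `C`. -/
theorem subcategory_topology_is_grothendieck_topology
    {C : Type u} [SmallCategory C] (P : C → Prop) :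
    ∃ J : GrothendieckTopology C, ∀ (x : C) (S : Sieve x), S ∈ J x ↔ subcatCovers P S :=
  ⟨subcategoryTopology P, fun _ => mem_subcategoryTopology_iff P⟩
end

section
/- Let G be a finite group and p a prime. On the category of finite G-sets, a sieve S on G/H belongs to the subcategory topology J^{O_p(G)} determined by the full subcategory of orbits G/Q with Q a p-subgroup, if and only if S contains some G-map G/P_H → G/H where P_H is a Sylow p-subgroup of H; that is, J^{O_p(G)} coincides with Balmer's sipp topology. -/
open CategoryTheory

/-- The category of finite (left) `G`-sets. -/
abbrev GSet (G : Type) [Group G] := Action FintypeCat (MonCat.of G)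

/-- The orbit `G/H` as a finite `G`-set. -/
noncomputable def orb (G : Type) [Group G] [Finite G] (H : Subgroup G) : GSet G :=
  haveI : Fintype (G ⧸ H) := Fintype.ofFinite _
  Action.FintypeCat.ofMulAction G (FintypeCat.of (G ⧸ H))

/-!
A `G`-map `G/Q → G/H` is `xQ ↦ xcH` for some `c` with `c⁻¹Qc ≤ H`. If `S` is covering, the
projection `G/P → G/H` from a Sylow `p`-subgroup `P` of `H` factors through some `f ∈ S`, so `S`
contains a map out of `G/P`. Conversely, let `f : G/P → G/H` in `S` be given by `b`, with `P` Sylow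
in `H`, and `g : G/Q → G/H` by `a`, with `Q` a `p`-group. Then `b⁻¹Pb` is again a Sylow subgroup
of `H`, so Sylow's theorem conjugates the `p`-subgroup `a⁻¹Qa` of `H` into it by some `x ∈ H`,
and `c = a x⁻¹ b⁻¹` defines a map `G/Q → G/P` through which `g` factors as `f`.
-/

namespace Subgroup

variable {G : Type*} [Group G]

theorem relIndex_map_equiv_of_le {P H : Subgroup G} [H.FiniteIndex] (e : G ≃* G)
    (hP : P ≤ H) (heP : P.map e.toMonoidHom ≤ H) :
    (P.map e.toMonoidHom).relIndex H = P.relIndex H := by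
  refine Nat.eq_of_mul_eq_mul_right (Nat.pos_of_ne_zero (FiniteIndex.index_ne_zero (H := H))) ?_
  rw [relIndex_mul_index heP, relIndex_mul_index hP]
  exact index_map_equiv P e

open Pointwise in
theorem exists_mem_conj_mem_of_isPGroup [Finite G] {p : ℕ} [Fact p.Prime] {H R K : Subgroup G}
    (hRH : R ≤ H) (hR : IsPGroup p R) (hK : IsPGroup p K)
    (hKi : ¬ p ∣ K.relIndex H) : ∃ x ∈ H, ∀ r ∈ R, x * r * x⁻¹ ∈ K := by
  let T : Sylow p H := (hK.comap_subtype (K := H)).toSylow hKi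
  obtain ⟨T', hRT'⟩ := (hR.comap_subtype (K := H)).exists_le_sylow
  obtain ⟨x, hx⟩ := MulAction.exists_smul_eq H T' T
  refine ⟨x, x.2, fun r hr => ?_⟩
  have hmem : x * ⟨r, hRH hr⟩ * x⁻¹ ∈ ((x • T' : Sylow p H) : Subgroup H) := by
    rw [Sylow.coe_subgroup_smul]
    exact smul_mem_pointwise_smul _ _ _ (hRT' (by simpa [mem_subgroupOf] using hr))
  rw [hx] at hmem
  simpa [T, mem_subgroupOf] using hmem

theorem exists_isPGroup_not_dvd_relIndex [Finite G] (p : ℕ) [Fact p.Prime] (H : Subgroup G) :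
    ∃ P ≤ H, IsPGroup p P ∧ ¬ p ∣ P.relIndex H := by
  obtain ⟨T⟩ := (inferInstance : Nonempty (Sylow p H))
  refine ⟨(T : Subgroup H).map H.subtype, map_subtype_le _, T.isPGroup'.map _, ?_⟩
  rw [relIndex, subgroupOf, comap_map_eq_self_of_injective H.subtype_injective]
  exact T.not_dvd_index

end Subgroup

section Orbits

variable {G : Type} [Group G] [Finite G]

noncomputable def orbMap (Q H : Subgroup G) (c : G) (hc : ∀ q ∈ Q, c⁻¹ * q * c ∈ H) :
    orb G Q ⟶ orb G H where
  hom := FintypeCat.homMk <| Quotient.lift (s := QuotientGroup.leftRel Q)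
    (fun x => (QuotientGroup.mk (x * c) : G ⧸ H)) fun x y hxy => QuotientGroup.eq.mpr <| by
      rw [show (x * c)⁻¹ * (y * c) = c⁻¹ * (x⁻¹ * y) * c by group]
      exact hc _ (QuotientGroup.leftRel_apply.mp hxy)
  comm g := by
    ext x
    induction x using QuotientGroup.induction_on
    exact congrArg QuotientGroup.mk (mul_assoc _ _ _)

theorem orbMap_hom_mk (Q H : Subgroup G) (c : G) (hc : ∀ q ∈ Q, c⁻¹ * q * c ∈ H) (x : G) :
    (orbMap Q H c hc).hom (QuotientGroup.mk x : G ⧸ Q) = (QuotientGroup.mk (x * c) : G ⧸ H) :=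
  rfl

theorem orb_hom_mk_eq_smul {Q H : Subgroup G} (f : orb G Q ⟶ orb G H) (x : G) :
    f.hom (QuotientGroup.mk x : G ⧸ Q) = x • f.hom (QuotientGroup.mk 1 : G ⧸ Q) := by
  have h : f.hom (x • (QuotientGroup.mk 1 : G ⧸ Q)) = x • f.hom (QuotientGroup.mk 1 : G ⧸ Q) :=
    ConcreteCategory.congr_hom (f.comm x) _
  simpa using h

theorem orb_hom_ext {Q H : Subgroup G} {f g : orb G Q ⟶ orb G H}
    (h : f.hom (QuotientGroup.mk 1 : G ⧸ Q) = g.hom (QuotientGroup.mk 1 : G ⧸ Q)) : f = g := by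
  refine Action.hom_ext _ _ (FintypeCat.hom_ext _ _ fun (y : G ⧸ Q) => ?_)
  induction y using QuotientGroup.induction_on
  rw [orb_hom_mk_eq_smul f, orb_hom_mk_eq_smul g, h]

theorem exists_eq_orbMap {Q H : Subgroup G} (f : orb G Q ⟶ orb G H) :
    ∃ c hc, f = orbMap Q H c hc := by
  obtain ⟨c, hc⟩ := QuotientGroup.mk_surjective (s := H) (f.hom (QuotientGroup.mk 1 : G ⧸ Q))
  have hconj : ∀ q ∈ Q, c⁻¹ * q * c ∈ H := fun q hq => by
    have hfix : f.hom (QuotientGroup.mk q : G ⧸ Q) = f.hom (QuotientGroup.mk 1 : G ⧸ Q) :=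
      congrArg f.hom (QuotientGroup.eq.mpr (by simpa using hq))
    rw [orb_hom_mk_eq_smul f q, ← hc] at hfix
    simpa [mul_assoc] using QuotientGroup.eq.mp hfix.symm
  exact ⟨c, hconj, orb_hom_ext (by rw [orbMap_hom_mk, one_mul, hc])⟩

theorem exists_comp_eq_of_isPGroup {p : ℕ} [Fact p.Prime]
    {P Q H : Subgroup G} (hPH : P ≤ H) (hP : IsPGroup p P) (hPi : ¬ p ∣ P.relIndex H)
    (hQ : IsPGroup p Q) (f : orb G P ⟶ orb G H) (g : orb G Q ⟶ orb G H) :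
    ∃ h : orb G Q ⟶ orb G P, h ≫ f = g := by
  obtain ⟨a, ha, rfl⟩ := exists_eq_orbMap g
  obtain ⟨b, hb, rfl⟩ := exists_eq_orbMap f
  set R := Q.map (MulAut.conj a⁻¹).toMonoidHom
  set K := P.map (MulAut.conj b⁻¹).toMonoidHom
  have hRH : R ≤ H := by
    rintro _ ⟨q, hq, rfl⟩
    simpa using ha q hq
  have hKH : K ≤ H := by
    rintro _ ⟨q, hq, rfl⟩
    simpa using hb q hq
  have hKi : ¬ p ∣ K.relIndex H := by rwa [Subgroup.relIndex_map_equiv_of_le _ hPH hKH]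
  obtain ⟨x, hxH, hx⟩ := Subgroup.exists_mem_conj_mem_of_isPGroup hRH (hQ.map _) (hP.map _) hKi
  set c := a * x⁻¹ * b⁻¹
  have hc : ∀ q ∈ Q, c⁻¹ * q * c ∈ P := fun q hq => by
    obtain ⟨s, hs, hs_eq⟩ := hx _ (Subgroup.mem_map_of_mem _ hq)
    simp only [MulEquiv.toMonoidHom_eq_coe, MonoidHom.coe_coe, MulAut.conj_apply, inv_inv] at hs_eq
    have hs' : c⁻¹ * q * c = s :=
      calc c⁻¹ * q * c = b * (x * (a⁻¹ * q * a) * x⁻¹) * b⁻¹ := by simp only [c]; group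
        _ = s := by rw [← hs_eq]; group
    exact hs' ▸ hs
  refine ⟨orbMap Q P c hc, orb_hom_ext (QuotientGroup.eq.mpr ?_)⟩
  rwa [show (1 * c * b)⁻¹ * (1 * a) = x by simp only [c]; group]

end Orbits

/-- Let `G` be a finite group and `p` a prime.  On the category of finite `G`-sets, a
sieve `S` on `G/H` belongs to the subcategory topology `J^{O_p(G)}` determined by the
full subcategory of orbits `G/Q` with `Q` a `p`-subgroup iff `S` contains some `G`-map
`G/P_H → G/H` with `P_H` a Sylow `p`-subgroup of `H` (i.e. `P_H ≤ H`, `P_H` a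
`p`-group, with index in `H` prime to `p`); that is, `J^{O_p(G)}` coincides with
Balmer's sipp topology. -/
theorem subcategory_topology_of_p_orbits_is_sipp
    (G : Type) [Group G] [Finite G] (p : ℕ) (hp : p.Prime)
    (J : GrothendieckTopology (GSet G))
    (hJ : ∀ (U : GSet G) (S : Sieve U), S ∈ J U ↔
      ∀ (Q : Subgroup G), IsPGroup p Q →
        ∀ g : orb G Q ⟶ U, ∃ (Y : GSet G) (f : Y ⟶ U) (h : orb G Q ⟶ Y),
          S f ∧ h ≫ f = g) :
    ∀ (H : Subgroup G) (S : Sieve (orb G H)), S ∈ J (orb G H) ↔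
      ∃ (P : Subgroup G) (f : orb G P ⟶ orb G H),
        P ≤ H ∧ IsPGroup p P ∧ ¬ p ∣ P.relIndex H ∧ S f := by
  have := Fact.mk hp
  intro H S
  rw [hJ]
  constructor
  · intro hS
    obtain ⟨P, hPH, hP, hPi⟩ := H.exists_isPGroup_not_dvd_relIndex p
    obtain ⟨Y, f, h, hSf, -⟩ := hS P hP (orbMap P H 1 fun q hq => by simpa using hPH hq)
    exact ⟨P, h ≫ f, hPH, hP, hPi, S.downward_closed hSf h⟩
  · rintro ⟨P, f, hPH, hP, hPi, hSf⟩ Q hQ g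
    obtain ⟨h, rfl⟩ := exists_comp_eq_of_isPGroup hPH hP hPi hQ f g
    exact ⟨_, f, h, hSf, rfl⟩
end

section
/- Let G be a finite group and p a prime dividing |G|. In the orbit category O(G) with the sipp topology, the minimal covering sieve on G/H equals the maximal sieve if H is a p-group, and is the principal sieve generated by any G-map G/1 → G/H if p does not divide |H|. -/
open CategoryTheory

/-- The orbit category `O(G)`. -/
noncomputable abbrev OrbitCat (G : Type) [Group G] [Finite G] :=
  InducedCategory (GSet G) (orb G)

/-- A subgroup regarded as an object of the orbit category. -/
noncomputable def toOrb (G : Type) [Group G] [Finite G] (H : Subgroup G) : OrbitCat G := H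

/-- `J` is the sipp topology: a sieve on `G/H` is covering iff it contains a morphism
`G/P → G/H` with `P` a Sylow `p`-subgroup of `H`. -/
def IsSippTopology (G : Type) [Group G] [Finite G] (p : ℕ)
    (J : GrothendieckTopology (OrbitCat G)) : Prop :=
  ∀ (H : Subgroup G) (S : Sieve (toOrb G H)), S ∈ J (toOrb G H) ↔
    ∃ (P : Subgroup G) (f : toOrb G P ⟶ toOrb G H),
      P ≤ H ∧ IsPGroup p P ∧ ¬ p ∣ P.relIndex H ∧ S f

/-! Every `G`-map between orbits is surjective, because `G` acts transitively on the target.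
Hence an endomorphism of `G/H` is an automorphism, and a map out of the free orbit `G/1` lifts
along any map into `G/H`. If `H` is a `p`-group, its only Sylow `p`-subgroup is `H` itself, so
every covering sieve on `G/H` contains an automorphism and is maximal. If `p ∤ |H|`, the trivial
subgroup is Sylow in `H`, so `f : G/1 → G/H` generates a covering sieve, and `f` lifts through
the arrow witnessing any other covering sieve. -/

theorem IsPGroup.eq_of_le_of_not_dvd_relIndex {p : ℕ} [Fact p.Prime] {G : Type*} [Group G]
    {Q H : Subgroup G} (hH : IsPGroup p H) (hQH : Q ≤ H) (hindex : ¬ p ∣ Q.relIndex H) :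
    Q = H := by
  rw [Subgroup.relIndex] at hindex
  have : (Q.subgroupOf H).FiniteIndex := ⟨fun h0 => hindex (h0 ▸ dvd_zero p)⟩
  obtain ⟨n, hn⟩ := hH.index (Q.subgroupOf H)
  rcases n with _ | n
  · exact le_antisymm hQH (Subgroup.relIndex_eq_one.mp hn)
  · exact absurd (hn ▸ dvd_pow_self p n.succ_ne_zero) hindex

namespace OrbitCat

variable {G : Type} [Group G] [Finite G]

theorem hom_smul {K H : Subgroup G} (f : toOrb G K ⟶ toOrb G H) (g : G) (x : G ⧸ K) :
    (f.hom.hom (g • x) : G ⧸ H) = g • (f.hom.hom x : G ⧸ H) :=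
  ConcreteCategory.congr_hom (f.hom.comm g) x

theorem hom_surjective {K H : Subgroup G} (f : toOrb G K ⟶ toOrb G H) :
    Function.Surjective f.hom.hom := by
  intro y
  obtain ⟨g, hg⟩ := MulAction.exists_smul_eq G (α := G ⧸ H) (f.hom.hom ((1 : G) : G ⧸ K)) y
  exact ⟨g • ((1 : G) : G ⧸ K), (hom_smul f g _).trans hg⟩

theorem hom_ext {K H : Subgroup G} {f f' : toOrb G K ⟶ toOrb G H}
    (h : f.hom.hom ((1 : G) : G ⧸ K) = f'.hom.hom ((1 : G) : G ⧸ K)) : f = f' := by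
  refine InducedCategory.hom_ext (Action.hom_ext _ _ (ConcreteCategory.hom_ext _ _ fun x => ?_))
  obtain ⟨g, rfl⟩ := QuotientGroup.mk_surjective (s := K) x
  have hg : (g : G ⧸ K) = g • ((1 : G) : G ⧸ K) := by simp
  rw [hg, hom_smul, hom_smul, h]

theorem isIso_of_endo {H : Subgroup G} (k : toOrb G H ⟶ toOrb G H) : IsIso k := by
  have hk : Function.Bijective k.hom.hom := Finite.surjective_iff_bijective.mp (hom_surjective k)
  have : IsIso k.hom.hom := (ConcreteCategory.isIso_iff_bijective _).2 hk
  have : IsIso ((inducedFunctor (orb G)).map k) := Action.isIso_of_hom_isIso k.hom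
  exact isIso_of_reflects_iso k (inducedFunctor (orb G))

noncomputable def homOfLeStabilizer {K Q : Subgroup G} (x : G ⧸ Q)
    (hx : K ≤ MulAction.stabilizer G x) : toOrb G K ⟶ toOrb G Q :=
  InducedCategory.homMk
    { hom := FintypeCat.homMk (Quotient.lift (fun g : G => g • x) fun a b hab => by
        have := hx (QuotientGroup.leftRel_apply.mp hab)
        rwa [MulAction.mem_stabilizer_iff, mul_smul, inv_smul_eq_iff, eq_comm] at this :
          G ⧸ K → G ⧸ Q)
      comm := fun g => by
        ext y
        obtain ⟨a, rfl⟩ := QuotientGroup.mk_surjective (s := K) y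
        exact mul_smul (g : G) a x }

theorem homOfLeStabilizer_apply_one {K Q : Subgroup G} (x : G ⧸ Q)
    (hx : K ≤ MulAction.stabilizer G x) :
    (homOfLeStabilizer x hx).hom.hom ((1 : G) : G ⧸ K) = x :=
  one_smul G x

theorem exists_comp_eq_of_bot {Q H : Subgroup G} (k : toOrb G Q ⟶ toOrb G H)
    (f : toOrb G ⊥ ⟶ toOrb G H) : ∃ r, r ≫ k = f := by
  obtain ⟨x, hx⟩ := hom_surjective k (f.hom.hom ((1 : G) : G ⧸ ⊥))
  exact ⟨homOfLeStabilizer x bot_le,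
    hom_ext ((congrArg k.hom.hom (homOfLeStabilizer_apply_one x bot_le)).trans hx)⟩

end OrbitCat

theorem sipp_minimal_covering_sieve_general
    (G : Type) [Group G] [Finite G] (p : ℕ) (hp : p.Prime)
    (J : GrothendieckTopology (OrbitCat G)) (hJ : IsSippTopology G p J)
    (H : Subgroup G) :
    (IsPGroup p H →
      ((⊤ : Sieve (toOrb G H)) ∈ J (toOrb G H) ∧
        ∀ T ∈ J (toOrb G H), (⊤ : Sieve (toOrb G H)) ≤ T)) ∧
    (¬ p ∣ Nat.card H →
      ∀ f : toOrb G (⊥ : Subgroup G) ⟶ toOrb G H,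
        (Sieve.generate (Presieve.singleton f) ∈ J (toOrb G H) ∧
          ∀ T ∈ J (toOrb G H), Sieve.generate (Presieve.singleton f) ≤ T)) := by
  have : Fact p.Prime := ⟨hp⟩
  refine ⟨fun hH => ⟨?_, fun T hT => ?_⟩, fun hpH f => ⟨?_, fun T hT => ?_⟩⟩
  · rw [hJ]
    exact ⟨H, 𝟙 _, le_rfl, hH, by simpa using hp.one_lt.ne', trivial⟩
  · obtain ⟨Q, k, hQH, -, hQ, hk⟩ := (hJ H T).1 hT
    obtain rfl := hH.eq_of_le_of_not_dvd_relIndex hQH hQ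
    have := OrbitCat.isIso_of_endo k
    rw [← Sieve.generate_sieve T, Sieve.generate_of_contains_isSplitEpi k hk]
  · rw [hJ]
    exact ⟨⊥, f, bot_le, IsPGroup.of_bot, by rwa [Subgroup.relIndex_bot_left],
      Sieve.le_generate _ _ _ (Presieve.singleton_self f)⟩
  · obtain ⟨Q, k, -, -, -, hk⟩ := (hJ H T).1 hT
    obtain ⟨r, rfl⟩ := OrbitCat.exists_comp_eq_of_bot k f
    rw [Sieve.generate_le_iff]
    rintro _ _ ⟨⟩
    exact T.downward_closed hk r

/-- Let `G` be a finite group and `p` a prime dividing `|G|`.  In the orbit category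
`O(G)` with the sipp topology, the minimal covering sieve on `G/H` equals the maximal
sieve if `H` is a `p`-group, and is the principal sieve generated by any `G`-map
`G/1 → G/H` if `p` does not divide `|H|`. -/
theorem sipp_minimal_covering_sieve
    (G : Type) [Group G] [Finite G] (p : ℕ) (hp : p.Prime) (hpG : p ∣ Nat.card G)
    (J : GrothendieckTopology (OrbitCat G)) (hJ : IsSippTopology G p J)
    (H : Subgroup G) :
    (IsPGroup p H →
      ((⊤ : Sieve (toOrb G H)) ∈ J (toOrb G H) ∧
        ∀ T ∈ J (toOrb G H), (⊤ : Sieve (toOrb G H)) ≤ T)) ∧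
    (¬ p ∣ Nat.card H →
      ∀ f : toOrb G (⊥ : Subgroup G) ⟶ toOrb G H,
        (Sieve.generate (Presieve.singleton f) ∈ J (toOrb G H) ∧
          ∀ T ∈ J (toOrb G H), Sieve.generate (Presieve.singleton f) ≤ T)) :=
  sipp_minimal_covering_sieve_general G p hp J hJ H
end
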